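/- For a finite group G with a supercharacter theory, and superclasses K₁, K₂ ∈ SCl(G), the second orthogonality relation holds: Σ_{χ∈SCh(G)} (c(χ)/χ(1)) χ(K₁) conj(χ(K₂)) = (|G|/|K₁|) δ_{K₁,K₂}. -/

import Mathlib

/-!
First orthogonality says that the supercharacter table `X` (rows `χ`, columns `K`, entries
`χ(K)`) satisfies `X D Xᴴ = W` with `D = diag(|K|/|G|)` and `W = diag(χ(1)/c(χ))`. Since the
table is square, the one-sided inverse `W⁻¹ X D` of `Xᴴ` is two-sided, and the entries of
`Xᴴ W⁻¹ X D = 1` are the second orthogonality relations.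
-/

open scoped BigOperators
open Finset

/-- The Frobenius scalar product `⟨f,g⟩ = (1/|G|) Σ_{x∈G} f(x) conj(g(x))`. -/
noncomputable def frob (G : Type*) [Fintype G] [Group G] (f g : G → ℂ) : ℂ :=
  (Fintype.card G : ℂ)⁻¹ * ∑ x : G, f x * (starRingEnd ℂ) (g x)

open Matrix

theorem Matrix.mul_diagonal_mul_eq_diagonal_comm {ι κ R : Type*} [Fintype ι] [Fintype κ]
    [DecidableEq ι] [DecidableEq κ] [Field R] (hcard : Fintype.card ι = Fintype.card κ)
    (X : Matrix ι κ R) (Y : Matrix κ ι R) (d : κ → R) (w : ι → R) (hw : ∀ i, w i ≠ 0)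
    (h : X * diagonal d * Y = diagonal w) :
    Y * diagonal w⁻¹ * X * diagonal d = 1 := by
  have hleft : diagonal w⁻¹ * X * diagonal d * Y = 1 := by
    rw [Matrix.mul_assoc, Matrix.mul_assoc, ← Matrix.mul_assoc X, h, diagonal_mul_diagonal]
    simp [hw]
  rw [Matrix.mul_assoc, Matrix.mul_assoc, ← Matrix.mul_assoc (diagonal w⁻¹)]
  exact (mul_eq_one_comm_of_card_eq ι κ R hcard).mp hleft

theorem Finset.sum_eq_sum_sum_of_existsUnique_mem {α M : Type*} [Fintype α] [DecidableEq α]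
    [AddCommMonoid M] (P : Finset (Finset α)) (hP : ∀ a : α, ∃! K, K ∈ P ∧ a ∈ K) (f : α → M) :
    ∑ a, f a = ∑ K ∈ P, ∑ a ∈ K, f a := by
  have huniv : (univ : Finset α) = P.biUnion id := by
    ext a
    obtain ⟨K, hK, -⟩ := hP a
    simpa using ⟨K, hK⟩
  rw [huniv, sum_biUnion]
  · rfl
  intro K hK L hL hKL
  refine Finset.disjoint_left.mpr fun a haK haL => hKL ?_
  obtain ⟨M, -, hM⟩ := hP a
  exact (hM K ⟨hK, haK⟩).trans (hM L ⟨hL, haL⟩).symm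

def superTable {G : Type*} {SCl : Finset (Finset G)} (SCh : Finset (G → ℂ)) (rep : SCl → G) :
    Matrix SCh SCl ℂ :=
  of fun χ K => χ.1 (rep K)

section Superclasses

variable {G : Type*} [Fintype G] [Group G] [DecidableEq G] {SCl : Finset (Finset G)}

theorem frob_eq_sum_superclasses (hpart : ∀ g : G, ∃! K, K ∈ SCl ∧ g ∈ K)
    (rep : SCl → G) (hrep : ∀ K, rep K ∈ K.1) {f₁ f₂ : G → ℂ}
    (hf₁ : ∀ K ∈ SCl, ∀ g ∈ K, ∀ h ∈ K, f₁ g = f₁ h)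
    (hf₂ : ∀ K ∈ SCl, ∀ g ∈ K, ∀ h ∈ K, f₂ g = f₂ h) :
    frob G f₁ f₂ = ∑ K : SCl,
      f₁ (rep K) * ((K.1.card : ℂ) / Fintype.card G) * starRingEnd ℂ (f₂ (rep K)) := by
  rw [frob, Finset.sum_eq_sum_sum_of_existsUnique_mem SCl hpart, ← Finset.sum_coe_sort SCl,
    Finset.mul_sum]
  refine Finset.sum_congr rfl fun K _ => ?_
  rw [Finset.sum_congr rfl fun g hg => by
    rw [hf₁ K K.2 g hg (rep K) (hrep K), hf₂ K K.2 g hg (rep K) (hrep K)]]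
  rw [Finset.sum_const, nsmul_eq_mul]
  ring

theorem superTable_mul_diagonal_mul_conjTranspose {SCh : Finset (G → ℂ)} {c : (G → ℂ) → ℂ}
    (hpart : ∀ g : G, ∃! K, K ∈ SCl ∧ g ∈ K)
    (hconst : ∀ χ ∈ SCh, ∀ K ∈ SCl, ∀ g ∈ K, ∀ h ∈ K, χ g = χ h)
    (horth : ∀ χ₁ ∈ SCh, ∀ χ₂ ∈ SCh,
      frob G χ₁ χ₂ = if χ₁ = χ₂ then χ₁ 1 / c χ₁ else 0)
    (rep : SCl → G) (hrep : ∀ K, rep K ∈ K.1) :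
    superTable SCh rep * diagonal (fun K : SCl => (K.1.card : ℂ) / Fintype.card G)
        * (superTable SCh rep)ᴴ
      = diagonal fun χ : SCh => χ.1 1 / c χ.1 := by
  ext χ₁ χ₂
  simp only [diagonal_apply, Subtype.ext_iff]
  rw [← horth χ₁ χ₁.2 χ₂ χ₂.2,
    frob_eq_sum_superclasses hpart rep hrep (hconst χ₁ χ₁.2) (hconst χ₂ χ₂.2)]
  simp [superTable, Matrix.mul_apply, diagonal_apply]

end Superclasses

theorem stmt1 (G : Type*) [Fintype G] [Group G] [DecidableEq G]
    (SCl : Finset (Finset G)) (SCh : Finset (G → ℂ)) (c : (G → ℂ) → ℂ)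
    -- SCl is a partition of G into (nonempty) superclasses
    (hpart : ∀ g : G, ∃! K, K ∈ SCl ∧ g ∈ K)
    (hne : ∀ K ∈ SCl, K.Nonempty)
    -- supercharacters are constant on superclasses
    (hconst : ∀ χ ∈ SCh, ∀ K ∈ SCl, ∀ g ∈ K, ∀ h ∈ K, χ g = χ h)
    -- the supercharacter table is square
    (hcard : SCl.card = SCh.card)
    -- degrees are nonzero and c(χ)/χ(1) is a positive real
    (hpos : ∀ χ ∈ SCh, ∃ r : ℝ, 0 < r ∧ c χ / χ 1 = (r : ℂ))
    -- first orthogonality relations (may be assumed)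
    (horth : ∀ χ₁ ∈ SCh, ∀ χ₂ ∈ SCh,
      frob G χ₁ χ₂ = if χ₁ = χ₂ then χ₁ 1 / c χ₁ else 0)
    (K₁ K₂ : Finset G) (hK₁ : K₁ ∈ SCl) (hK₂ : K₂ ∈ SCl)
    (g₁ : G) (hg₁ : g₁ ∈ K₁) (g₂ : G) (hg₂ : g₂ ∈ K₂) :
    ∑ χ ∈ SCh, (c χ / χ 1) * χ g₁ * (starRingEnd ℂ) (χ g₂)
      = ((Fintype.card G : ℂ) / (K₁.card : ℂ)) * (if K₁ = K₂ then 1 else 0) := by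
  let rep : SCl → G := fun K => (hne K.1 K.2).choose
  have hrep : ∀ K, rep K ∈ K.1 := fun K => (hne K.1 K.2).choose_spec
  have hw : ∀ χ : SCh, χ.1 1 / c χ.1 ≠ 0 := fun χ => by
    obtain ⟨r, hr, hχ⟩ := hpos χ.1 χ.2
    rw [← inv_div, hχ]
    exact inv_ne_zero (Complex.ofReal_ne_zero.mpr hr.ne')
  have key := congrFun₂ (Matrix.mul_diagonal_mul_eq_diagonal_comm (by simp [hcard]) _ _ _ _ hw
    (superTable_mul_diagonal_mul_conjTranspose hpart hconst horth rep hrep)) ⟨K₂, hK₂⟩ ⟨K₁, hK₁⟩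
  rw [mul_diagonal, Matrix.mul_apply, one_apply] at key
  simp only [mul_diagonal, conjTranspose_apply, superTable, of_apply, Pi.inv_apply, inv_div] at key
  have hsum : ∑ χ : SCh, star (χ.1 (rep ⟨K₂, hK₂⟩)) * (c χ.1 / χ.1 1) * χ.1 (rep ⟨K₁, hK₁⟩)
      = ∑ χ ∈ SCh, (c χ / χ 1) * χ g₁ * (starRingEnd ℂ) (χ g₂) := by
    rw [← Finset.sum_coe_sort SCh]
    refine Fintype.sum_congr _ _ fun χ => ?_
    rw [hconst χ χ.2 K₁ hK₁ _ (hrep ⟨K₁, hK₁⟩) g₁ hg₁,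
      hconst χ χ.2 K₂ hK₂ _ (hrep ⟨K₂, hK₂⟩) g₂ hg₂, Complex.star_def]
    ring
  rw [hsum] at key
  simp only [Subtype.mk.injEq, eq_comm (a := K₂)] at key
  have hK₁card : (K₁.card : ℂ) ≠ 0 := Nat.cast_ne_zero.mpr (hne K₁ hK₁).card_pos.ne'
  have hG : (Fintype.card G : ℂ) ≠ 0 := Nat.cast_ne_zero.mpr Fintype.card_ne_zero
  rw [← key]
  field_simp
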